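/- arXiv:1211.6032 — 5 statements merged into one kernel-verified Lean document; each statement's English description precedes it below -/
import Mathlib

section
/- Let H₁, H₂, H₃ be complex Hilbert spaces, and let T : H₁ → H₂ and S : H₂ → H₃ be closed, densely defined (possibly unbounded) linear operators such that T(Dom T) ⊆ Dom S and S(Tζ) = 0 for all ζ ∈ Dom T. Suppose there exists a constant C > 0 such that ‖Sζ‖² + ‖T*ζ‖² ≥ C‖ζ‖² for all ζ ∈ Dom S ∩ Dom T*, where T* denotes the Hilbert space adjoint of T. Then for every ψ ∈ Dom S with Sψ = 0 there exists ξ ∈ Dom T with Tξ = ψ and ‖ξ‖² ≤ (1/C)·‖ψ‖². In particular, ker S = range T. -/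
/-!
Hörmander's L² method. For `ψ ∈ ker S` and `ζ ∈ Dom T*`, split `ζ` along `ker S ⊕ (ker S)ᗮ`;
since `range T ⊆ ker S`, the second component lies in `ker T*`, so the a priori estimate applied to
the first one gives `|⟪ψ, ζ⟫| ≤ C^{-1/2} ‖ψ‖ ‖T*ζ‖`. Hence `T*ζ ↦ ⟪ψ, ζ⟫` is a well-defined
bounded functional on `range T*`; Hahn–Banach and Riesz produce `ξ` with `‖ξ‖ ≤ C^{-1/2} ‖ψ‖` and
`⟪ξ, T*ζ⟫ = ⟪ψ, ζ⟫` for all `ζ`, which says `(ξ, ψ)` lies in the graph of `T** = T`.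
-/

open LinearPMap
open scoped InnerProductSpace

namespace LinearPMap

section

variable {R E F : Type*} [Ring R] [AddCommGroup E] [Module R E] [AddCommGroup F] [Module R F]

def ker (f : E →ₗ.[R] F) : Submodule R E :=
  (LinearMap.ker f.toFun).map f.domain.subtype

theorem mem_ker_iff {f : E →ₗ.[R] F} {x : E} :
    x ∈ f.ker ↔ ∃ hx : x ∈ f.domain, f ⟨x, hx⟩ = 0 := by
  simp [ker]

end

section

variable {R E F : Type*} [CommRing R] [AddCommGroup E] [Module R E] [AddCommGroup F] [Module R F]

theorem isClosed_ker [TopologicalSpace E] [TopologicalSpace F] {f : E →ₗ.[R] F}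
    (hf : f.IsClosed) : _root_.IsClosed (f.ker : Set E) := by
  have : (f.ker : Set E) = (fun x ↦ (x, (0 : F))) ⁻¹' f.graph := by
    ext x
    simp [mem_ker_iff]
  rw [this]
  exact hf.preimage (by fun_prop)

end

end LinearPMap

theorem exists_strongDual_comp_eq_of_norm_le {𝕜 V E : Type*} [RCLike 𝕜] [AddCommGroup V]
    [Module 𝕜 V] [NormedAddCommGroup E] [NormedSpace 𝕜 E] (A : V →ₗ[𝕜] E) (q : V →ₗ[𝕜] 𝕜)
    {M : ℝ} (hM : 0 ≤ M) (h : ∀ v, ‖q v‖ ≤ M * ‖A v‖) :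
    ∃ g : StrongDual 𝕜 E, (∀ v, g (A v) = q v) ∧ ‖g‖ ≤ M := by
  obtain ⟨B, hB⟩ := A.rangeRestrict.exists_rightInverse_of_surjective A.range_rangeRestrict
  have hAB (η : LinearMap.range A) : A (B η) = η :=
    congr_arg Subtype.val (LinearMap.congr_fun hB η)
  have hf (η : LinearMap.range A) : ‖(q ∘ₗ B) η‖ ≤ M * ‖η‖ := by
    simpa [hAB] using h (B η)
  obtain ⟨g, hg, hg_norm⟩ := exists_extension_norm_eq _ ((q ∘ₗ B).mkContinuous M hf)
  refine ⟨g, fun v ↦ ?_, hg_norm ▸ (q ∘ₗ B).mkContinuous_norm_le hM hf⟩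
  -- the bound forces `q` to vanish on `ker A`, so `q ∘ B` does not depend on the choice of `B`
  have hqBA : q (B (A.rangeRestrict v)) = q v := by
    simpa [hAB, sub_eq_zero] using h (B (A.rangeRestrict v) - v)
  simpa using (hg (A.rangeRestrict v)).trans hqBA

section

variable {𝕜 E F : Type*} [RCLike 𝕜]
  [NormedAddCommGroup E] [InnerProductSpace 𝕜 E] [CompleteSpace E]
  [NormedAddCommGroup F] [InnerProductSpace 𝕜 F]

theorem Submodule.adjoint_adjoint_le [CompleteSpace F] {g : Submodule 𝕜 (E × F)}
    (hg : IsClosed (g : Set (E × F))) : g.adjoint.adjoint ≤ g := by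
  -- `g.adjoint` is the skew-swapped `gᗮ`, so `g.adjoint.adjoint` lies in `gᗮᗮ = g`
  let G : Submodule 𝕜 (WithLp 2 (E × F)) :=
    g.comap (WithLp.linearEquiv 2 𝕜 (E × F)).toLinearMap
  have : CompleteSpace G :=
    (hg.preimage (WithLp.prod_continuous_ofLp 2 E F)).completeSpace_coe
  intro x hx
  suffices WithLp.toLp 2 x ∈ Gᗮᗮ by rwa [Submodule.orthogonal_orthogonal] at this
  refine (Submodule.mem_orthogonal _ _).2 fun u hu ↦ ?_
  have hadj : ((WithLp.ofLp u).2, -(WithLp.ofLp u).1) ∈ g.adjoint := by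
    refine (Submodule.mem_adjoint_iff _ _).2 fun c d hcd ↦ ?_
    have := (Submodule.mem_orthogonal _ _).1 hu (WithLp.toLp 2 (c, d)) hcd
    rw [WithLp.prod_inner_apply] at this
    rw [inner_neg_right, sub_neg_eq_add, add_comm]
    exact this
  have := (Submodule.mem_adjoint_iff _ _).1 hx _ _ hadj
  rw [WithLp.prod_inner_apply]
  rw [inner_neg_left] at this
  linear_combination -this

namespace LinearPMap

variable {T : E →ₗ.[𝕜] F}

theorem mem_graph_of_inner_adjoint [CompleteSpace F] (hT : Dense (T.domain : Set E))
    (hT_closed : T.IsClosed) {ξ : E} {ψ : F}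
    (h : ∀ ζ : T†.domain, ⟪ξ, T† ζ⟫_𝕜 = ⟪ψ, (ζ : F)⟫_𝕜) : (ξ, ψ) ∈ T.graph := by
  refine Submodule.adjoint_adjoint_le hT_closed ((Submodule.mem_adjoint_iff _ _).2 ?_)
  intro a b hab
  rw [← adjoint_graph_eq_graph_adjoint hT, mem_graph_iff] at hab
  obtain ⟨ζ, rfl, rfl⟩ := hab
  rw [← inner_conj_symm, h ζ, inner_conj_symm, sub_self]

theorem orthogonal_le_ker_adjoint (hT : Dense (T.domain : Set E)) {K : Submodule 𝕜 F}
    (hTK : ∀ x : T.domain, T x ∈ K) : Kᗮ ≤ T†.ker := by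
  intro v hv
  have hinner (x : T.domain) : ⟪(0 : E), (x : E)⟫_𝕜 = ⟪v, T x⟫_𝕜 := by
    rw [inner_zero_left, Submodule.inner_left_of_mem_orthogonal (hTK x) hv]
  exact mem_ker_iff.2 ⟨mem_adjoint_domain_of_exists v ⟨0, hinner⟩, adjoint_apply_eq hT _ hinner⟩

theorem exists_adjoint_apply_eq_starProjection (hT : Dense (T.domain : Set E))
    {K : Submodule 𝕜 F} [K.HasOrthogonalProjection] (hTK : ∀ x : T.domain, T x ∈ K)
    (ζ : T†.domain) :
    ∃ ζ' : T†.domain, (ζ' : F) = K.starProjection ζ ∧ T† ζ' = T† ζ := by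
  obtain ⟨hζ, hζ0⟩ := mem_ker_iff.1 <|
    orthogonal_le_ker_adjoint hT hTK (K.sub_starProjection_mem_orthogonal ζ)
  refine ⟨ζ - ⟨_, hζ⟩, sub_sub_cancel _ _, ?_⟩
  rw [map_sub, hζ0, sub_zero]

theorem norm_inner_le_of_adjoint_estimate (hT : Dense (T.domain : Set E)) {K : Submodule 𝕜 F}
    [K.HasOrthogonalProjection] (hTK : ∀ x : T.domain, T x ∈ K) {C : ℝ} (hC : 0 < C)
    (hest : ∀ ζ : T†.domain, (ζ : F) ∈ K → C * ‖(ζ : F)‖ ^ 2 ≤ ‖T† ζ‖ ^ 2)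
    {ψ : F} (hψ : ψ ∈ K) (ζ : T†.domain) : ‖⟪ψ, (ζ : F)⟫_𝕜‖ ≤ ‖ψ‖ / √C * ‖T† ζ‖ := by
  obtain ⟨ζ', hζ', hTζ'⟩ := exists_adjoint_apply_eq_starProjection hT hTK ζ
  have hζ'_norm : √C * ‖(ζ' : F)‖ ≤ ‖T† ζ‖ := by
    refine le_of_pow_le_pow_left₀ two_ne_zero (norm_nonneg _) ?_
    rw [mul_pow, Real.sq_sqrt hC.le, ← hTζ']
    exact hest ζ' (hζ' ▸ K.starProjection_apply_mem ζ)
  have hinner : ⟪ψ, (ζ : F)⟫_𝕜 = ⟪ψ, (ζ' : F)⟫_𝕜 := by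
    rw [hζ', ← K.inner_starProjection_left_eq_right, K.starProjection_eq_self_iff.2 hψ]
  calc ‖⟪ψ, (ζ : F)⟫_𝕜‖ = ‖⟪ψ, (ζ' : F)⟫_𝕜‖ := by rw [hinner]
    _ ≤ ‖ψ‖ * ‖(ζ' : F)‖ := norm_inner_le_norm _ _
    _ ≤ ‖ψ‖ * (‖T† ζ‖ / √C) := by gcongr; rwa [le_div_iff₀' (Real.sqrt_pos.2 hC)]
    _ = ‖ψ‖ / √C * ‖T† ζ‖ := by ring

theorem exists_apply_eq_of_adjoint_estimate [CompleteSpace F] (hT : Dense (T.domain : Set E))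
    (hT_closed : T.IsClosed) {K : Submodule 𝕜 F} [K.HasOrthogonalProjection]
    (hTK : ∀ x : T.domain, T x ∈ K) {C : ℝ} (hC : 0 < C)
    (hest : ∀ ζ : T†.domain, (ζ : F) ∈ K → C * ‖(ζ : F)‖ ^ 2 ≤ ‖T† ζ‖ ^ 2)
    {ψ : F} (hψ : ψ ∈ K) : ∃ ξ : T.domain, T ξ = ψ ∧ ‖(ξ : E)‖ ^ 2 ≤ 1 / C * ‖ψ‖ ^ 2 := by
  obtain ⟨g, hg, hg_norm⟩ := exists_strongDual_comp_eq_of_norm_le T†.toFun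
    (innerₛₗ 𝕜 ψ ∘ₗ T†.domain.subtype) (by positivity)
    (norm_inner_le_of_adjoint_estimate hT hTK hC hest hψ)
  set ξ := (InnerProductSpace.toDual 𝕜 E).symm g
  have hξ (ζ : T†.domain) : ⟪ξ, T† ζ⟫_𝕜 = ⟪ψ, (ζ : F)⟫_𝕜 :=
    InnerProductSpace.toDual_symm_apply.trans (hg ζ)
  obtain ⟨ξ', hξ', hTξ'⟩ := (mem_graph_iff _).1 (mem_graph_of_inner_adjoint hT hT_closed hξ)
  refine ⟨ξ', hTξ', ?_⟩
  have hξ_norm : ‖ξ‖ ≤ ‖ψ‖ / √C := by rwa [LinearIsometryEquiv.norm_map]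
  calc ‖(ξ' : E)‖ ^ 2 = ‖ξ‖ ^ 2 := by rw [hξ']
    _ ≤ (‖ψ‖ / √C) ^ 2 := by gcongr
    _ = 1 / C * ‖ψ‖ ^ 2 := by rw [div_pow, Real.sq_sqrt hC.le]; ring

end LinearPMap

end

theorem index_thm_quasi_tori_stmt0_general
    {H₁ H₂ H₃ : Type*}
    [NormedAddCommGroup H₁] [InnerProductSpace ℂ H₁] [CompleteSpace H₁]
    [NormedAddCommGroup H₂] [InnerProductSpace ℂ H₂] [CompleteSpace H₂]
    [NormedAddCommGroup H₃] [InnerProductSpace ℂ H₃]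
    (T : H₁ →ₗ.[ℂ] H₂) (S : H₂ →ₗ.[ℂ] H₃)
    (hT_dense : Dense (T.domain : Set H₁)) (hT_closed : T.IsClosed)
    (hS_closed : S.IsClosed)
    (hST : ∀ ζ : T.domain, ∃ h : (T ζ : H₂) ∈ S.domain, S ⟨T ζ, h⟩ = 0)
    (C : ℝ) (hC : 0 < C)
    (hest : ∀ (ζ : H₂) (hζS : ζ ∈ S.domain) (hζT : ζ ∈ T.adjoint.domain),
      C * ‖ζ‖ ^ 2 ≤ ‖S ⟨ζ, hζS⟩‖ ^ 2 + ‖T.adjoint ⟨ζ, hζT⟩‖ ^ 2) :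
    (∀ ψ : S.domain, S ψ = 0 →
      ∃ ξ : T.domain, (T ξ : H₂) = (ψ : H₂) ∧ ‖(ξ : H₁)‖ ^ 2 ≤ (1 / C) * ‖(ψ : H₂)‖ ^ 2)
    ∧ {ψ : H₂ | ∃ hψ : ψ ∈ S.domain, S ⟨ψ, hψ⟩ = 0}
        = {ψ : H₂ | ∃ ξ : T.domain, (T ξ : H₂) = ψ} := by
  have : CompleteSpace S.ker := (isClosed_ker hS_closed).completeSpace_coe
  have hTS (x : T.domain) : T x ∈ S.ker := mem_ker_iff.2 (hST x)
  have hest_ker (ζ : T†.domain) (hζ : (ζ : H₂) ∈ S.ker) : C * ‖(ζ : H₂)‖ ^ 2 ≤ ‖T† ζ‖ ^ 2 := by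
    obtain ⟨hζS, hSζ⟩ := mem_ker_iff.1 hζ
    simpa [hSζ] using hest ζ hζS ζ.2
  have hsolve {ψ : H₂} (hψ : ψ ∈ S.ker) :=
    exists_apply_eq_of_adjoint_estimate hT_dense hT_closed hTS hC hest_ker hψ
  refine ⟨fun ψ hψ ↦ hsolve (mem_ker_iff.2 ⟨ψ.2, hψ⟩), Set.ext fun ψ ↦ ⟨fun hψ ↦ ?_, ?_⟩⟩
  · obtain ⟨ξ, hξ, -⟩ := hsolve (mem_ker_iff.2 hψ)
    exact ⟨ξ, hξ⟩
  · rintro ⟨ξ, rfl⟩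
    exact hST ξ

/-- **Hörmander's existence theorem from an a priori estimate.**
Let `T : H₁ → H₂` and `S : H₂ → H₃` be closed, densely defined operators between complex
Hilbert spaces with `S ∘ T = 0`.  If `‖Sζ‖² + ‖T*ζ‖² ≥ C‖ζ‖²` on `Dom S ∩ Dom T*` for some
`C > 0`, then every `ψ ∈ ker S` is of the form `ψ = Tξ` with `‖ξ‖² ≤ (1/C)‖ψ‖²`;
in particular `ker S = range T`. -/
theorem index_thm_quasi_tori_stmt0
    {H₁ H₂ H₃ : Type*}
    [NormedAddCommGroup H₁] [InnerProductSpace ℂ H₁] [CompleteSpace H₁]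
    [NormedAddCommGroup H₂] [InnerProductSpace ℂ H₂] [CompleteSpace H₂]
    [NormedAddCommGroup H₃] [InnerProductSpace ℂ H₃] [CompleteSpace H₃]
    (T : H₁ →ₗ.[ℂ] H₂) (S : H₂ →ₗ.[ℂ] H₃)
    (hT_dense : Dense (T.domain : Set H₁)) (hT_closed : T.IsClosed)
    (hS_dense : Dense (S.domain : Set H₂)) (hS_closed : S.IsClosed)
    (hST : ∀ ζ : T.domain, ∃ h : (T ζ : H₂) ∈ S.domain, S ⟨T ζ, h⟩ = 0)
    (C : ℝ) (hC : 0 < C)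
    (hest : ∀ (ζ : H₂) (hζS : ζ ∈ S.domain) (hζT : ζ ∈ T.adjoint.domain),
      C * ‖ζ‖ ^ 2 ≤ ‖S ⟨ζ, hζS⟩‖ ^ 2 + ‖T.adjoint ⟨ζ, hζT⟩‖ ^ 2) :
    (∀ ψ : S.domain, S ψ = 0 →
      ∃ ξ : T.domain, (T ξ : H₂) = (ψ : H₂) ∧ ‖(ξ : H₁)‖ ^ 2 ≤ (1 / C) * ‖(ψ : H₂)‖ ^ 2)
    ∧ {ψ : H₂ | ∃ hψ : ψ ∈ S.domain, S ⟨ψ, hψ⟩ = 0}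
        = {ψ : H₂ | ∃ ξ : T.domain, (T ξ : H₂) = ψ} :=
  index_thm_quasi_tori_stmt0_general T S hT_dense hT_closed hS_closed hST C hC hest
end

section
/- Let 0 < m < n, and let Γ ⊆ ℂⁿ be the ℤ-span of the standard basis vectors e₁,…,e_{n−m} of ℂ^{n−m} × {0} together with 2m further vectors γ₁,…,γ_{2m} such that: (i) every element of Γ has real E-component, and (ii) the F-components of γ₁,…,γ_{2m} form an ℝ-basis of ℂ^m (viewed as a 2m-dimensional real vector space). Let X = ℂⁿ/Γ be the quotient topological group and π : ℂⁿ → X the quotient map. Then the function z = (u,v) ↦ ‖Im u‖² (Euclidean 2-norm of the imaginary part of the E-component) is Γ-invariant, hence induces a continuous function φ : X → ℝ≥0; and for every c ≥ 0 the sublevel set {x ∈ X : φ(x) ≤ c} is compact. In particular the open sets K_c := {x ∈ X : φ(x) < c}, c > 0, form an exhaustive family of relatively compact open subsets of X. -/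
/-!
Since every element of `Γ` has real `E`-component, translating by `Γ` does not change `Im u`,
so `‖Im u‖²` descends to a continuous function `φ` on `ℂⁿ/Γ`. Subtracting first an integer
combination of the `γⱼ` and then an integer vector in `ℤ^{n-m} × {0}`, every point becomes
congruent to one whose `F`-component lies in the parallelepiped spanned by the `F`-components of
the `γⱼ` and whose `E`-component has real parts in `[0, 1]`. On that set the condition
`‖Im u‖² ≤ c` cuts out a compact set, and its image in the quotient is `{φ ≤ c}`.
-/

open Set

section ImNormSq

variable {ι : Type*} [Fintype ι]

def imNormSq (u : ι → ℂ) : ℝ := ∑ i, (u i).im ^ 2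

lemma imNormSq_nonneg (u : ι → ℂ) : 0 ≤ imNormSq u :=
  Finset.sum_nonneg fun _ _ => sq_nonneg _

@[fun_prop]
lemma continuous_imNormSq : Continuous (imNormSq : (ι → ℂ) → ℝ) := by
  unfold imNormSq
  fun_prop

lemma imNormSq_add_of_im_eq_zero (u : ι → ℂ) {v : ι → ℂ} (hv : ∀ i, (v i).im = 0) :
    imNormSq (u + v) = imNormSq u := by
  simp [imNormSq, hv]

lemma isCompact_setOf_re_mem_Icc_imNormSq_le (a b c : ℝ) :
    IsCompact {u : ι → ℂ | (∀ i, (u i).re ∈ Icc a b) ∧ imNormSq u ≤ c} := by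
  have hclosed : IsClosed {u : ι → ℂ | (∀ i, (u i).re ∈ Icc a b) ∧ imNormSq u ≤ c} := by
    simp only [ofPred_and, ofPred_forall]
    exact (isClosed_iInter fun i => isClosed_Icc.preimage (by fun_prop)).inter
      (isClosed_le continuous_imNormSq continuous_const)
  have hbox : IsCompact (univ.pi fun _ : ι => Icc a b ×ℂ Icc (-√c) √c) :=
    isCompact_univ_pi fun _ => isCompact_Icc.reProdIm isCompact_Icc
  refine hbox.of_isClosed_subset hclosed ?_
  rintro u ⟨hre, him⟩ i -
  have hi : (u i).im ^ 2 ≤ c :=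
    (Finset.single_le_sum (fun k _ => sq_nonneg (u k).im) (Finset.mem_univ i)).trans him
  exact ⟨hre i, abs_le.1 (Real.abs_le_sqrt hi)⟩

end ImNormSq

lemma exists_re_sub_intCast_mem_Icc {ι : Type*} (u : ι → ℂ) :
    ∃ k : ι → ℤ, ∀ i, (u i - k i).re ∈ Icc 0 1 :=
  ⟨fun i => ⌊(u i).re⌋, fun i => by
    rw [Complex.sub_re, Complex.intCast_re, ← Int.fract]
    exact ⟨Int.fract_nonneg _, (Int.fract_lt_one _).le⟩⟩

lemma exists_sub_sum_zsmul_mem_parallelepiped {κ V : Type*} [Fintype κ] [NormedAddCommGroup V]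
    [NormedSpace ℝ V] {v : κ → V} (hli : LinearIndependent ℝ v)
    (hspan : Submodule.span ℝ (range v) = ⊤) (x : V) :
    ∃ k : κ → ℤ, x - ∑ j, k j • v j ∈ parallelepiped v := by
  let b := Module.Basis.mk hli hspan.ge
  have hb : ⇑b = v := Module.Basis.coe_mk hli hspan.ge
  obtain ⟨k, hk⟩ := (Submodule.mem_span_range_iff_exists_fun ℤ).1
    (ZSpan.floor b x).2
  refine ⟨k, ?_⟩
  rw [← hb, hk, ← ZSpan.fract_apply]
  exact ZSpan.fundamentalDomain_subset_parallelepiped b (ZSpan.fract_mem_fundamentalDomain b x)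

lemma IsCompact.of_surjOn_of_isCompact_inter_preimage {X Y : Type*} [TopologicalSpace X]
    [TopologicalSpace Y] {p : X → Y} {D : Set X} {s : Set Y} (hp : Continuous p)
    (hD : SurjOn p D s) (hK : IsCompact (D ∩ p ⁻¹' s)) : IsCompact s := by
  simpa [image_inter_preimage, inter_eq_right.2 hD] using hK.image hp

lemma QuotientAddGroup.exists_continuous_lift {G Y : Type*} [AddGroup G] [TopologicalSpace G]
    [TopologicalSpace Y] {Γ : AddSubgroup G} {f : G → Y} (hf : Continuous f)
    (hinv : ∀ z, ∀ g ∈ Γ, f (z + g) = f z) :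
    ∃ φ : G ⧸ Γ → Y, Continuous φ ∧ ∀ z, φ (QuotientAddGroup.mk z) = f z := by
  let φ : G ⧸ Γ → Y := Quotient.lift f fun a b hab => by
    have hab : -a + b ∈ Γ := QuotientAddGroup.leftRel_apply.1 hab
    simpa using (hinv a _ hab).symm
  exact ⟨φ, continuous_quot_lift _ hf, fun _ => rfl⟩

lemma intCast_prod_zero_mem {ι V : Type*} [Fintype ι] [DecidableEq ι] [AddCommGroup V]
    {Γ : AddSubgroup ((ι → ℂ) × V)}
    (he : ∀ i, ((Pi.single i 1 : ι → ℂ), (0 : V)) ∈ Γ) (k : ι → ℤ) :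
    ((fun i => (k i : ℂ)), (0 : V)) ∈ Γ := by
  have hsum :
      ((fun i => (k i : ℂ)), (0 : V)) = ∑ i, k i • ((Pi.single i 1 : ι → ℂ), (0 : V)) := by
    ext i <;> simp [Prod.fst_sum, Prod.snd_sum, Finset.sum_apply, Pi.single_apply]
  rw [hsum]
  exact sum_mem fun i _ => zsmul_mem (he i) _

section QuasiTorus

variable {ι κ V : Type*} [Fintype ι] [Fintype κ] [NormedAddCommGroup V] [NormedSpace ℝ V]

def quasiTorusDomain (v : κ → V) : Set ((ι → ℂ) × V) :=
  {z | (∀ i, (z.1 i).re ∈ Icc 0 1) ∧ z.2 ∈ parallelepiped v}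

lemma isCompact_quasiTorusDomain_inter_setOf_imNormSq_le (v : κ → V) (c : ℝ) :
    IsCompact (quasiTorusDomain (ι := ι) v ∩ {z | imNormSq z.1 ≤ c}) := by
  have hpar : IsCompact (parallelepiped v) := isCompact_Icc.image (by fun_prop)
  convert (isCompact_setOf_re_mem_Icc_imNormSq_le 0 1 c).prod hpar using 1
  ext z
  simp only [quasiTorusDomain, mem_inter_iff, mem_ofPred_eq, mem_prod]
  tauto

lemma exists_sub_mem_quasiTorusDomain [DecidableEq ι] {Γ : AddSubgroup ((ι → ℂ) × V)}
    {γ : κ → (ι → ℂ) × V} (he : ∀ i, ((Pi.single i 1 : ι → ℂ), (0 : V)) ∈ Γ)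
    (hγ : ∀ j, γ j ∈ Γ) (hli : LinearIndependent ℝ (fun j => (γ j).2))
    (hspan : Submodule.span ℝ (range fun j => (γ j).2) = ⊤) (z : (ι → ℂ) × V) :
    ∃ g ∈ Γ, z - g ∈ quasiTorusDomain (fun j => (γ j).2) := by
  obtain ⟨k, hk⟩ := exists_sub_sum_zsmul_mem_parallelepiped hli hspan z.2
  obtain ⟨l, hl⟩ := exists_re_sub_intCast_mem_Icc (z - ∑ j, k j • γ j).1
  refine ⟨∑ j, k j • γ j + ((fun i => (l i : ℂ)), 0),
    add_mem (sum_mem fun j _ => zsmul_mem (hγ j) _) (intCast_prod_zero_mem he l), ?_, ?_⟩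
  · simpa [sub_add_eq_sub_sub] using hl
  · simpa [Prod.snd_sum] using hk

end QuasiTorus

theorem index_thm_quasi_tori_stmt6_general
    (n m : ℕ)
    (γ : Fin (2 * m) → (Fin (n - m) → ℂ) × (Fin m → ℂ))
    (Γ : AddSubgroup ((Fin (n - m) → ℂ) × (Fin m → ℂ)))
    (hΓ : Γ = AddSubgroup.closure
      (Set.range (fun i : Fin (n - m) =>
        (((Pi.single i 1 : Fin (n - m) → ℂ), (0 : Fin m → ℂ))
          : (Fin (n - m) → ℂ) × (Fin m → ℂ)))
        ∪ Set.range γ))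
    (hreal : ∀ g ∈ Γ, ∀ i, (g.1 i).im = 0)
    (hli : LinearIndependent ℝ (fun j => (γ j).2))
    (hspan : Submodule.span ℝ (Set.range (fun j => (γ j).2)) = ⊤) :
    (∀ z : (Fin (n - m) → ℂ) × (Fin m → ℂ), ∀ g ∈ Γ,
        (∑ i, ((z + g).1 i).im ^ 2) = ∑ i, (z.1 i).im ^ 2)
    ∧ ∃ φ : ((Fin (n - m) → ℂ) × (Fin m → ℂ)) ⧸ Γ → ℝ,
        Continuous φ
        ∧ (∀ z, φ (QuotientAddGroup.mk z) = ∑ i, (z.1 i).im ^ 2)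
        ∧ (∀ x, 0 ≤ φ x)
        ∧ (∀ c : ℝ, 0 ≤ c → IsCompact {x | φ x ≤ c})
        ∧ (∀ c : ℝ, 0 < c →
            IsOpen {x | φ x < c} ∧ IsCompact (closure {x | φ x < c}))
        ∧ (⋃ c ∈ Set.Ioi (0 : ℝ), {x | φ x < c}) = Set.univ := by
  have hinv : ∀ z : (Fin (n - m) → ℂ) × (Fin m → ℂ), ∀ g ∈ Γ,
      imNormSq (z + g).1 = imNormSq z.1 :=
    fun z g hg => imNormSq_add_of_im_eq_zero z.1 (hreal g hg)
  obtain ⟨φ, hφc, hφ⟩ := QuotientAddGroup.exists_continuous_lift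
    (continuous_imNormSq.comp continuous_fst) hinv
  have hnonneg : ∀ x, 0 ≤ φ x :=
    QuotientAddGroup.mk_surjective.forall.2 fun z => (hφ z).symm ▸ imNormSq_nonneg z.1
  have hsurj :
      SurjOn (QuotientAddGroup.mk : _ → _ ⧸ Γ) (quasiTorusDomain fun j => (γ j).2) univ := by
    intro x _
    obtain ⟨z, rfl⟩ := QuotientAddGroup.mk_surjective x
    obtain ⟨g, hg, hzg⟩ := exists_sub_mem_quasiTorusDomain
      (fun i => hΓ.ge (AddSubgroup.subset_closure (Or.inl ⟨i, rfl⟩)))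
      (fun j => hΓ.ge (AddSubgroup.subset_closure (Or.inr ⟨j, rfl⟩))) hli hspan z
    exact ⟨z - g, hzg, QuotientAddGroup.eq.2 (by simpa using hg)⟩
  have hcompact : ∀ c, IsCompact {x | φ x ≤ c} := fun c =>
    IsCompact.of_surjOn_of_isCompact_inter_preimage (QuotientAddGroup.continuous_mk (N := Γ))
      (hsurj.mono subset_rfl (subset_univ _))
      (by simpa [preimage_ofPred_eq, hφ] using
        isCompact_quasiTorusDomain_inter_setOf_imNormSq_le (fun j => (γ j).2) c)
  refine ⟨hinv, φ, hφc, hφ, hnonneg, fun c _ => hcompact c, fun c _ =>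
    ⟨isOpen_lt hφc continuous_const, (hcompact c).of_isClosed_subset isClosed_closure
      (closure_lt_subset_le hφc continuous_const)⟩, ?_⟩
  exact eq_univ_of_forall fun x =>
    mem_iUnion₂.2 ⟨φ x + 1, by simpa using (hnonneg x).trans_lt (lt_add_one _),
      show φ x < φ x + 1 from lt_add_one _⟩

/-- On a Cousin-type quasi-torus `X = ℂⁿ/Γ` (with `Γ` generated by `e₁,…,e_{n-m}` and `2m`
vectors whose `F`-components form an `ℝ`-basis of `ℂ^m`, all elements of `Γ` having real
`E`-component), the function `z = (u,v) ↦ ‖Im u‖²` is `Γ`-invariant; the induced continuous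
function `φ : X → ℝ≥0` has compact sublevel sets `{φ ≤ c}`, so that the open sets
`K_c = {φ < c}`, `c > 0`, form an exhaustive family of relatively compact open subsets. -/
theorem index_thm_quasi_tori_stmt6
    (n m : ℕ) (hm : 0 < m) (hmn : m < n)
    (γ : Fin (2 * m) → (Fin (n - m) → ℂ) × (Fin m → ℂ))
    (Γ : AddSubgroup ((Fin (n - m) → ℂ) × (Fin m → ℂ)))
    (hΓ : Γ = AddSubgroup.closure
      (Set.range (fun i : Fin (n - m) =>
        (((Pi.single i 1 : Fin (n - m) → ℂ), (0 : Fin m → ℂ))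
          : (Fin (n - m) → ℂ) × (Fin m → ℂ)))
        ∪ Set.range γ))
    (hreal : ∀ g ∈ Γ, ∀ i, (g.1 i).im = 0)
    (hli : LinearIndependent ℝ (fun j => (γ j).2))
    (hspan : Submodule.span ℝ (Set.range (fun j => (γ j).2)) = ⊤) :
    (∀ z : (Fin (n - m) → ℂ) × (Fin m → ℂ), ∀ g ∈ Γ,
        (∑ i, ((z + g).1 i).im ^ 2) = ∑ i, (z.1 i).im ^ 2)
    ∧ ∃ φ : ((Fin (n - m) → ℂ) × (Fin m → ℂ)) ⧸ Γ → ℝ,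
        Continuous φ
        ∧ (∀ z, φ (QuotientAddGroup.mk z) = ∑ i, (z.1 i).im ^ 2)
        ∧ (∀ x, 0 ≤ φ x)
        ∧ (∀ c : ℝ, 0 ≤ c → IsCompact {x | φ x ≤ c})
        ∧ (∀ c : ℝ, 0 < c →
            IsOpen {x | φ x < c} ∧ IsCompact (closure {x | φ x < c}))
        ∧ (⋃ c ∈ Set.Ioi (0 : ℝ), {x | φ x < c}) = Set.univ :=
  index_thm_quasi_tori_stmt6_general n m γ Γ hΓ hreal hli hspan
end

section
/- Let 0 < m < n and let Γ ⊆ ℂⁿ be a subgroup all of whose elements have real E-component. Let ℋ : ℂⁿ × ℂⁿ → ℂ be a hermitian form and let ℬ : ℂ^{n−m} × ℂ^{n−m} → ℂ be a symmetric ℂ-bilinear form taking real values on pairs of real vectors. Define ℋ'(z,w) := ℋ(z,w) + ℬ(u_z, conj(u_w)), where u_z denotes the E-component of z and conj is the coordinatewise complex conjugate. Then: (a) ℋ' is a hermitian form on ℂⁿ × ℂⁿ; (b) Im ℋ'(γ,γ') = Im ℋ(γ,γ') for all γ, γ' ∈ Γ; (c) for all z ∈ ℂⁿ and γ ∈ Γ,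 π·ℋ'(z,γ) + (π/2)·ℋ'(γ,γ) = π·ℋ(z,γ) + (π/2)·ℋ(γ,γ) + (π/2)·(ℬ(u_z + u_γ, u_z + u_γ) − ℬ(u_z, u_z)); (d) Re ℋ'(eᵢ, eⱼ) = Re ℋ(eᵢ, eⱼ) + ℬ(eᵢ, eⱼ) for all standard basis vectors eᵢ, eⱼ of ℂ^{n−m} × {0}. In particular, by varying ℬ, the real part of the restriction of ℋ to E × E can be altered to any prescribed real symmetric matrix while changing the normal-form exponents π·ℋ(z,γ) + (π/2)·ℋ(γ,γ) only by the coboundary of z ↦ (π/2)·ℬ(u_z, u_z) and leaving Im ℋ unchanged on Γ × Γ. -/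
/-!
Everything reduces to one fact: a symmetric bilinear form `ℬ` with real coefficients commutes
with complex conjugation, `conj (ℬ(a, b)) = ℬ(conj a, conj b)`; it follows by splitting
`a = Re a + i Im a` and `b = Re b + i Im b` and expanding. This makes `ℬ(u_z, conj u_w)`
hermitian. On `Γ` the `E`-components are real, so there the correction term is `ℬ(u_γ, u_γ')`,
which is real, and the exponent identity is the expansion of `ℬ(u_z + u_γ, u_z + u_γ)`.
-/

section RealBilinear

variable {ι : Type*} (B : (ι → ℂ) → (ι → ℂ) → ℂ)

lemma add_right_of_symm (hB_add : ∀ a a' b, B (a + a') b = B a b + B a' b)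
    (hB_symm : ∀ a b, B a b = B b a) (a b b' : ι → ℂ) : B a (b + b') = B a b + B a b' := by
  rw [hB_symm, hB_add, hB_symm b, hB_symm b']

lemma smul_right_of_symm (hB_smul : ∀ (c : ℂ) a b, B (c • a) b = c * B a b)
    (hB_symm : ∀ a b, B a b = B b a) (c : ℂ) (a b : ι → ℂ) : B a (c • b) = c * B a b := by
  rw [hB_symm, hB_smul, hB_symm]

lemma apply_add_smul_add_smul (hB_add : ∀ a a' b, B (a + a') b = B a b + B a' b)
    (hB_smul : ∀ (c : ℂ) a b, B (c • a) b = c * B a b)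
    (hB_symm : ∀ a b, B a b = B b a) (c : ℂ) (x y x' y' : ι → ℂ) :
    B (x + c • y) (x' + c • y')
      = B x x' + c * B x y' + c * B y x' + c * c * B y y' := by
  rw [hB_add, add_right_of_symm B hB_add hB_symm, add_right_of_symm B hB_add hB_symm,
    hB_smul, hB_smul, smul_right_of_symm B hB_smul hB_symm,
    smul_right_of_symm B hB_smul hB_symm]
  ring

lemma conj_apply_of_real (hB_add : ∀ a a' b, B (a + a') b = B a b + B a' b)
    (hB_smul : ∀ (c : ℂ) a b, B (c • a) b = c * B a b)
    (hB_symm : ∀ a b, B a b = B b a)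
    (hB_real : ∀ a b, (∀ i, (a i).im = 0) → (∀ i, (b i).im = 0) → (B a b).im = 0)
    (a b : ι → ℂ) :
    starRingEnd ℂ (B a b)
      = B (fun i => starRingEnd ℂ (a i)) (fun i => starRingEnd ℂ (b i)) := by
  let re (x : ι → ℂ) : ι → ℂ := fun i => ((x i).re : ℂ)
  let im (x : ι → ℂ) : ι → ℂ := fun i => ((x i).im : ℂ)
  have h_split (x : ι → ℂ) : x = re x + Complex.I • im x := by
    funext i
    simp only [re, im, Pi.add_apply, Pi.smul_apply, smul_eq_mul]
    rw [mul_comm, Complex.re_add_im]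
  have h_split_conj (x : ι → ℂ) :
      (fun i => starRingEnd ℂ (x i)) = re x + (-Complex.I) • im x := by
    funext i; apply Complex.ext <;> simp [re, im]
  have h_conj_real (x y : ι → ℂ) (hx : ∀ i, (x i).im = 0) (hy : ∀ i, (y i).im = 0) :
      starRingEnd ℂ (B x y) = B x y :=
    Complex.conj_eq_iff_im.mpr (hB_real x y hx hy)
  have hre (x : ι → ℂ) : ∀ i, (re x i).im = 0 := fun i => Complex.ofReal_im _
  have him (x : ι → ℂ) : ∀ i, (im x i).im = 0 := fun i => Complex.ofReal_im _
  conv_lhs => rw [h_split a, h_split b]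
  rw [h_split_conj a, h_split_conj b, apply_add_smul_add_smul B hB_add hB_smul hB_symm,
    apply_add_smul_add_smul B hB_add hB_smul hB_symm]
  simp only [map_add, map_mul, Complex.conj_I, h_conj_real _ _ (hre _) (hre _),
    h_conj_real _ _ (hre _) (him _), h_conj_real _ _ (him _) (hre _),
    h_conj_real _ _ (him _) (him _)]

end RealBilinear

theorem index_thm_quasi_tori_stmt8_general
    (n m : ℕ)
    (Γ : AddSubgroup ((Fin (n - m) → ℂ) × (Fin m → ℂ)))
    (hΓreal : ∀ g ∈ Γ, ∀ i, (g.1 i).im = 0)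
    (H : ((Fin (n - m) → ℂ) × (Fin m → ℂ)) → ((Fin (n - m) → ℂ) × (Fin m → ℂ)) → ℂ)
    (hH_add : ∀ z z' w, H (z + z') w = H z w + H z' w)
    (hH_smul : ∀ (a : ℂ) z w, H (a • z) w = a * H z w)
    (hH_conj : ∀ z w, H w z = starRingEnd ℂ (H z w))
    (B : (Fin (n - m) → ℂ) → (Fin (n - m) → ℂ) → ℂ)
    (hB_add : ∀ a a' b, B (a + a') b = B a b + B a' b)
    (hB_smul : ∀ (c : ℂ) a b, B (c • a) b = c * B a b)
    (hB_symm : ∀ a b, B a b = B b a)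
    (hB_real : ∀ a b, (∀ i, (a i).im = 0) → (∀ i, (b i).im = 0) → (B a b).im = 0)
    (H' : ((Fin (n - m) → ℂ) × (Fin m → ℂ)) → ((Fin (n - m) → ℂ) × (Fin m → ℂ)) → ℂ)
    (hH' : ∀ z w, H' z w = H z w + B z.1 (fun i => starRingEnd ℂ (w.1 i))) :
    -- (a) `ℋ'` is a hermitian form
    ((∀ z z' w, H' (z + z') w = H' z w + H' z' w)
      ∧ (∀ (a : ℂ) z w, H' (a • z) w = a * H' z w)
      ∧ (∀ z w, H' w z = starRingEnd ℂ (H' z w)))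
    -- (b) `Im ℋ' = Im ℋ` on `Γ × Γ`
    ∧ (∀ g ∈ Γ, ∀ g' ∈ Γ, (H' g g').im = (H g g').im)
    -- (c) the normal-form exponents change by a coboundary
    ∧ (∀ z, ∀ g ∈ Γ,
        (Real.pi : ℂ) * H' z g + ((Real.pi : ℂ) / 2) * H' g g
          = (Real.pi : ℂ) * H z g + ((Real.pi : ℂ) / 2) * H g g
            + ((Real.pi : ℂ) / 2) * (B (z.1 + g.1) (z.1 + g.1) - B z.1 z.1))
    -- (d) the real part on `E × E` is shifted by `ℬ`
    ∧ (∀ i j : Fin (n - m),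
        (H' ((Pi.single i 1 : Fin (n - m) → ℂ), 0)
            ((Pi.single j 1 : Fin (n - m) → ℂ), 0)).re
          = (H ((Pi.single i 1 : Fin (n - m) → ℂ), 0)
                ((Pi.single j 1 : Fin (n - m) → ℂ), 0)).re
            + (B (Pi.single i 1) (Pi.single j 1)).re) := by
  have h_conj_of_real {x : Fin (n - m) → ℂ} (hx : ∀ i, (x i).im = 0) :
      (fun i => starRingEnd ℂ (x i)) = x :=
    funext fun i => Complex.conj_eq_iff_im.mpr (hx i)
  have h_conj_single (j : Fin (n - m)) :
      (fun k => starRingEnd ℂ ((Pi.single j 1 : Fin (n - m) → ℂ) k)) = Pi.single j 1 :=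
    h_conj_of_real fun k => by by_cases h : k = j <;> simp [h]
  refine ⟨⟨fun z z' w => ?_, fun a z w => ?_, fun z w => ?_⟩, fun g hg g' hg' => ?_,
    fun z g hg => ?_, fun i j => ?_⟩
  · rw [hH', hH', hH', hH_add, Prod.fst_add, hB_add]; ring
  · rw [hH', hH', hH_smul, Prod.smul_fst, hB_smul]; ring
  · rw [hH', hH', map_add, ← hH_conj, conj_apply_of_real B hB_add hB_smul hB_symm hB_real]
    simp only [Complex.conj_conj]
    rw [hB_symm]
  · rw [hH', h_conj_of_real (hΓreal g' hg'), Complex.add_im,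
      hB_real _ _ (hΓreal g hg) (hΓreal g' hg'), add_zero]
  · rw [hH', hH', h_conj_of_real (hΓreal g hg), hB_add,
      add_right_of_symm B hB_add hB_symm, add_right_of_symm B hB_add hB_symm, hB_symm g.1 z.1]
    ring
  · rw [hH', h_conj_single, Complex.add_re]

/-- Modifying a hermitian form `ℋ` associated to a line bundle by a symmetric `ℂ`-bilinear
form `ℬ` with real coefficients on `E × E`: `ℋ'(z,w) = ℋ(z,w) + ℬ(u_z, conj u_w)` is again
hermitian, has the same imaginary part on `Γ × Γ`, changes the normal-form exponents only
by the coboundary of `z ↦ (π/2)ℬ(u_z,u_z)`, and its real part on `E × E` is shifted by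
`ℬ`. -/
theorem index_thm_quasi_tori_stmt8
    (n m : ℕ) (hm : 0 < m) (hmn : m < n)
    (Γ : AddSubgroup ((Fin (n - m) → ℂ) × (Fin m → ℂ)))
    (hΓreal : ∀ g ∈ Γ, ∀ i, (g.1 i).im = 0)
    (H : ((Fin (n - m) → ℂ) × (Fin m → ℂ)) → ((Fin (n - m) → ℂ) × (Fin m → ℂ)) → ℂ)
    (hH_add : ∀ z z' w, H (z + z') w = H z w + H z' w)
    (hH_smul : ∀ (a : ℂ) z w, H (a • z) w = a * H z w)
    (hH_conj : ∀ z w, H w z = starRingEnd ℂ (H z w))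
    (B : (Fin (n - m) → ℂ) → (Fin (n - m) → ℂ) → ℂ)
    (hB_add : ∀ a a' b, B (a + a') b = B a b + B a' b)
    (hB_smul : ∀ (c : ℂ) a b, B (c • a) b = c * B a b)
    (hB_symm : ∀ a b, B a b = B b a)
    (hB_real : ∀ a b, (∀ i, (a i).im = 0) → (∀ i, (b i).im = 0) → (B a b).im = 0)
    (H' : ((Fin (n - m) → ℂ) × (Fin m → ℂ)) → ((Fin (n - m) → ℂ) × (Fin m → ℂ)) → ℂ)
    (hH' : ∀ z w, H' z w = H z w + B z.1 (fun i => starRingEnd ℂ (w.1 i))) :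
    -- (a) `ℋ'` is a hermitian form
    ((∀ z z' w, H' (z + z') w = H' z w + H' z' w)
      ∧ (∀ (a : ℂ) z w, H' (a • z) w = a * H' z w)
      ∧ (∀ z w, H' w z = starRingEnd ℂ (H' z w)))
    -- (b) `Im ℋ' = Im ℋ` on `Γ × Γ`
    ∧ (∀ g ∈ Γ, ∀ g' ∈ Γ, (H' g g').im = (H g g').im)
    -- (c) the normal-form exponents change by a coboundary
    ∧ (∀ z, ∀ g ∈ Γ,
        (Real.pi : ℂ) * H' z g + ((Real.pi : ℂ) / 2) * H' g g
          = (Real.pi : ℂ) * H z g + ((Real.pi : ℂ) / 2) * H g g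
            + ((Real.pi : ℂ) / 2) * (B (z.1 + g.1) (z.1 + g.1) - B z.1 z.1))
    -- (d) the real part on `E × E` is shifted by `ℬ`
    ∧ (∀ i j : Fin (n - m),
        (H' ((Pi.single i 1 : Fin (n - m) → ℂ), 0)
            ((Pi.single j 1 : Fin (n - m) → ℂ), 0)).re
          = (H ((Pi.single i 1 : Fin (n - m) → ℂ), 0)
                ((Pi.single j 1 : Fin (n - m) → ℂ), 0)).re
            + (B (Pi.single i 1) (Pi.single j 1)).re) :=
  index_thm_quasi_tori_stmt8_general n m Γ hΓreal H hH_add hH_smul hH_conj B hB_add hB_smul hB_symm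
    hB_real H' hH'
end

section
/- Let H be a complex inner product space, let M > 0 and ν ≥ 0 be real numbers, and let λ be a real number with λ ≥ max{M/2, 2ν²/M, 4ν}. Let x, y, w ∈ H satisfy ⟨x,y⟩ = 0, ⟨w,y⟩ = 0 and ‖w‖ ≤ ν·‖y‖. Then λ·‖x‖² + 2·Re⟨x,w⟩ + M·‖y‖² ≥ (M/4)·‖x+y‖². -/
/-!
Cauchy–Schwarz and `‖w‖ ≤ ν‖y‖` give `Re⟨x,w⟩ ≥ -ν‖x‖‖y‖`, and Pythagoras gives
`‖x+y‖² = ‖x‖² + ‖y‖²`, so everything reduces to the real quadratic form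
`(λ - M/4)a² - 2νab + (3M/4)b² ≥ 0` in `a = ‖x‖`, `b = ‖y‖`. Completing the square, this
holds as soon as `ν² ≤ (λ - M/4)(3M/4)`, which follows from the three lower bounds on `λ`:
if `M ≤ λ` one uses `λM ≥ 2ν²`, and if `λ ≤ M ≤ 2λ` one uses `λ ≥ 4ν`.
-/

theorem two_mul_mul_le_of_sq_le_mul {A C ν : ℝ} (hA : 0 < A) (h : ν ^ 2 ≤ A * C) (a b : ℝ) :
    2 * ν * a * b ≤ A * a ^ 2 + C * b ^ 2 := by
  -- `A (A a² - 2νab + C b²) = (A a - ν b)² + (A C - ν²) b²`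
  have hscaled : A * (2 * ν * a * b) ≤ A * (A * a ^ 2 + C * b ^ 2) := by
    nlinarith [sq_nonneg (A * a - ν * b), mul_nonneg (sub_nonneg.mpr h) (sq_nonneg b)]
  exact le_of_mul_le_mul_left hscaled hA

theorem sq_le_mul_of_le_lam {M ν lam : ℝ} (hM : 0 < M) (hν : 0 ≤ ν)
    (h₁ : M / 2 ≤ lam) (h₂ : 2 * ν ^ 2 / M ≤ lam) (h₃ : 4 * ν ≤ lam) :
    ν ^ 2 ≤ (lam - M / 4) * (3 * M / 4) := by
  have hνM : 2 * ν ^ 2 ≤ lam * M := (div_le_iff₀ hM).mp h₂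
  rcases le_total M lam with hMl | hlM
  · nlinarith [mul_le_mul_of_nonneg_left hMl hM.le]
  · nlinarith [mul_le_mul_of_nonneg_left hlM (by linarith : (0 : ℝ) ≤ lam),
      mul_le_mul h₃ h₃ (by positivity) (by linarith)]

theorem index_thm_quasi_tori_stmt13_general
    {H : Type*} [NormedAddCommGroup H] [InnerProductSpace ℂ H]
    (M ν lam : ℝ) (hM : 0 < M) (hν : 0 ≤ ν)
    (hlam : lam ≥ max (max (M / 2) (2 * ν ^ 2 / M)) (4 * ν))
    (x y w : H)
    (hxy : (inner ℂ x y : ℂ) = 0)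
    (hw : ‖w‖ ≤ ν * ‖y‖) :
    lam * ‖x‖ ^ 2 + 2 * (inner ℂ x w : ℂ).re + M * ‖y‖ ^ 2
      ≥ (M / 4) * ‖x + y‖ ^ 2 := by
  obtain ⟨h₁₂, h₃⟩ := max_le_iff.mp hlam
  obtain ⟨h₁, h₂⟩ := max_le_iff.mp h₁₂
  have hpyth : ‖x + y‖ ^ 2 = ‖x‖ ^ 2 + ‖y‖ ^ 2 := by
    simpa only [sq] using norm_add_sq_eq_norm_sq_add_norm_sq_of_inner_eq_zero x y hxy
  have hre : -(ν * ‖x‖ * ‖y‖) ≤ (inner ℂ x w : ℂ).re :=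
    calc -(ν * ‖x‖ * ‖y‖)
        _ ≤ -(‖x‖ * ‖w‖) := by linarith [mul_le_mul_of_nonneg_left hw (norm_nonneg x)]
        _ ≤ (inner ℂ x w : ℂ).re :=
          neg_le.mpr (by simpa using re_inner_le_norm (𝕜 := ℂ) x (-w))
  have hquad := two_mul_mul_le_of_sq_le_mul (by linarith : 0 < lam - M / 4)
    (sq_le_mul_of_le_lam hM hν h₁ h₂ h₃) ‖x‖ ‖y‖
  rw [hpyth]
  linarith

/-- The completing-the-square estimate for the tame curvature term: if `⟨x,y⟩ = 0`,
`⟨w,y⟩ = 0`, `‖w‖ ≤ ν‖y‖` and `λ ≥ max{M/2, 2ν²/M, 4ν}` with `M > 0`, `ν ≥ 0`, then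
`λ‖x‖² + 2Re⟨x,w⟩ + M‖y‖² ≥ (M/4)‖x+y‖²`. -/
theorem index_thm_quasi_tori_stmt13
    {H : Type*} [NormedAddCommGroup H] [InnerProductSpace ℂ H]
    (M ν lam : ℝ) (hM : 0 < M) (hν : 0 ≤ ν)
    (hlam : lam ≥ max (max (M / 2) (2 * ν ^ 2 / M)) (4 * ν))
    (x y w : H)
    (hxy : (inner ℂ x y : ℂ) = 0) (hwy : (inner ℂ w y : ℂ) = 0)
    (hw : ‖w‖ ≤ ν * ‖y‖) :
    lam * ‖x‖ ^ 2 + 2 * (inner ℂ x w : ℂ).re + M * ‖y‖ ^ 2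
      ≥ (M / 4) * ‖x + y‖ ^ 2 :=
  index_thm_quasi_tori_stmt13_general M ν lam hM hν hlam x y w hxy hw
end

section
/- Let Γ be a discrete subgroup of ℂⁿ and let π : ℂⁿ → ℂⁿ/Γ be the quotient map onto the quotient topological group. Then K := π(span_ℝ Γ) is a compact subgroup of ℂⁿ/Γ, and every compact subgroup of ℂⁿ/Γ is contained in K; i.e., K = ℝΓ/Γ is the maximal compact subgroup of the quasi-torus ℂⁿ/Γ. -/
/-!
Inside `E = ℝΓ`, the discrete group `Γ` is a full `ℤ`-lattice, so `E/Γ` is the image of a compact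
parallelepiped and hence compact. Conversely, `ℂⁿ/Γ` maps continuously and additively onto the
normed space `ℂⁿ/E`, whose only bounded subgroup is `0`; a compact subgroup therefore lies in the
kernel of this map, which is `E/Γ`.
-/

open Submodule

theorem AddSubgroup.eq_bot_of_isBounded {F : Type*} [NormedAddCommGroup F] [NormedSpace ℝ F]
    (H : AddSubgroup F) (hH : Bornology.IsBounded (H : Set F)) : H = ⊥ := by
  refine (eq_bot_iff_forall H).2 fun x hx => norm_eq_zero.1 ?_
  obtain ⟨C, hC⟩ := isBounded_iff_forall_norm_le.1 hH
  have hmul : ∀ m : ℕ, m * ‖x‖ ≤ C := fun m => by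
    simpa [RCLike.norm_nsmul ℝ] using hC _ (H.nsmul_mem hx m)
  by_contra hx0
  have hpos : 0 < ‖x‖ := (norm_nonneg x).lt_of_ne' hx0
  obtain ⟨m, hm⟩ := exists_nat_gt (C / ‖x‖)
  linarith [(div_lt_iff₀ hpos).1 hm, hmul m]

theorem AddSubgroup.le_ker_of_isCompact {G F : Type*} [AddGroup G] [TopologicalSpace G]
    [NormedAddCommGroup F] [NormedSpace ℝ F] {H : AddSubgroup G} (hH : IsCompact (H : Set G))
    {φ : G →+ F} (hφ : Continuous φ) : H ≤ φ.ker := by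
  rw [← AddSubgroup.map_eq_bot_iff]
  exact (H.map φ).eq_bot_of_isBounded (hH.image hφ).isBounded

theorem QuotientAddGroup.le_map_of_isCompact {V : Type*} [NormedAddCommGroup V] [NormedSpace ℝ V]
    {Γ : AddSubgroup V} {E : Submodule ℝ V} [IsClosed (E : Set V)] (hΓE : Γ ≤ E.toAddSubgroup)
    {H : AddSubgroup (V ⧸ Γ)} (hH : IsCompact (H : Set (V ⧸ Γ))) :
    H ≤ E.toAddSubgroup.map (QuotientAddGroup.mk' Γ) := by
  have hΓ : Γ ≤ E.mkQ.toAddMonoidHom.ker := fun x hx => by simpa using hΓE hx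
  have hH_ker := AddSubgroup.le_ker_of_isCompact hH
    (φ := QuotientAddGroup.lift Γ E.mkQ.toAddMonoidHom hΓ)
    ((QuotientAddGroup.isQuotientMap_mk Γ).continuous_iff.2 E.isQuotientMap_mkQ.continuous)
  rwa [QuotientAddGroup.ker_lift, ← LinearMap.ker_toAddSubgroup, E.ker_mkQ] at hH_ker

section Lattice

variable {V : Type*} [NormedAddCommGroup V] [NormedSpace ℝ V] [FiniteDimensional ℝ V]

noncomputable abbrev AddSubgroup.latticeInSpan (Γ : AddSubgroup V) :
    Submodule ℤ (span ℝ (Γ : Set V)) :=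
  ZLattice.comap ℝ Γ.toIntSubmodule (span ℝ (Γ : Set V)).subtype

instance (Γ : AddSubgroup V) [DiscreteTopology Γ] : DiscreteTopology Γ.latticeInSpan :=
  ZLattice.comap_discreteTopology (hL := ‹DiscreteTopology Γ›) ℝ _ continuous_subtype_val
    (injective_subtype _)

instance (Γ : AddSubgroup V) [DiscreteTopology Γ] : IsZLattice ℝ Γ.latticeInSpan where
  span_top := by
    rw [ZLattice.coe_comap, AddSubgroup.coe_toIntSubmodule,
      span_preimage_eq ⟨0, Γ.zero_mem⟩ (by simp [subset_span]), comap_subtype_self]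

theorem QuotientAddGroup.isCompact_map_span (Γ : AddSubgroup V) [DiscreteTopology Γ] :
    IsCompact ((span ℝ (Γ : Set V)).toAddSubgroup.map (QuotientAddGroup.mk' Γ) : Set (V ⧸ Γ)) := by
  convert IsZLattice.isCompact_range_of_periodic Γ.latticeInSpan
    (fun x => ((x : V) : V ⧸ Γ)) (continuous_quot_mk.comp continuous_subtype_val)
    (fun x y hy => by simpa using QuotientAddGroup.mk_add_of_mem (x : V) hy) using 1
  ext
  simp

end Lattice

/-- For a discrete subgroup `Γ ⊆ ℂⁿ`, the image `K = ℝΓ/Γ` of the real span of `Γ` in the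
quasi-torus `X = ℂⁿ/Γ` is a compact subgroup containing every compact subgroup of `X`,
i.e. it is the maximal compact subgroup of `X`. -/
theorem index_thm_quasi_tori_stmt14
    (n : ℕ) (Γ : AddSubgroup (Fin n → ℂ)) [DiscreteTopology Γ]
    (K : AddSubgroup ((Fin n → ℂ) ⧸ Γ))
    (hK : K = AddSubgroup.map (QuotientAddGroup.mk' Γ)
      ((Submodule.span ℝ (Γ : Set (Fin n → ℂ))).toAddSubgroup)) :
    IsCompact (K : Set ((Fin n → ℂ) ⧸ Γ))
    ∧ ∀ H : AddSubgroup ((Fin n → ℂ) ⧸ Γ),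
        IsCompact (H : Set ((Fin n → ℂ) ⧸ Γ)) → H ≤ K := by
  subst hK
  have := (span ℝ (Γ : Set (Fin n → ℂ))).closed_of_finiteDimensional
  exact ⟨QuotientAddGroup.isCompact_map_span Γ,
    fun _ hH => QuotientAddGroup.le_map_of_isCompact subset_span hH⟩
end
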